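/- arXiv:1008.3071 — 2 statements merged into one kernel-verified Lean document; each statement's English description precedes it below -/
import Mathlib

section
/- Let $F$ be a field of characteristic $p > 0$, let $\phi: F((u)) \to F((u))$ be the ring endomorphism that is the identity on $F$ and sends $u$ to $u^p$. Let $N$ be a 2-dimensional $F((u))$-vector space and $\Phi: N \to N$ a $\phi$-semilinear map whose linearization $\phi^* N \to N$ is an isomorphism. If $\mathfrak{M}, \mathfrak{N} \subset N$ are lattices with elementary divisors $(a, b)$ of $\mathfrak{N}$ relative to $\mathfrak{M}$ (with $a \geq b$), then the elementary divisors of the lattice $\Phi(\phi^*\mathfrak{N})$ (the $F[[u]]$-span of $\Phi(\mathfrak{N})$) relative to $\Phi(\phi^*\mathfrak{M})$ are $(pa, pb)$. In particular the induced map $\bar\Phi$ on homothety classes of lattices multiplies the tree distance by $p$: $d(\bar\Phi(\bar{\mathfrak{M}}), \bar\Phi(\bar{\mathfrak{N}})) = p \cdot d(\bar{\mathfrak{M}}, \bar{\mathfrak{N}})$. -/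
/-- `u`, the uniformizer of `F[[u]]`, viewed inside the Laurent series field `F((u))`. -/
noncomputable def uLS (F : Type*) [Field F] : LaurentSeries F :=
  algebraMap (PowerSeries F) (LaurentSeries F) PowerSeries.X

private lemma span_image_span (F : Type*) [Field F]
    (φ : LaurentSeries F →+* LaurentSeries F)
    (hφR : ∀ r : PowerSeries F, ∃ r' : PowerSeries F,
      φ (algebraMap (PowerSeries F) (LaurentSeries F) r) =
        algebraMap (PowerSeries F) (LaurentSeries F) r')
    (Φ : LaurentSeries F × LaurentSeries F → LaurentSeries F × LaurentSeries F)
    (hΦadd : ∀ v w, Φ (v + w) = Φ v + Φ w)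
    (hΦsemi : ∀ (c : LaurentSeries F) v, Φ (c • v) = φ c • Φ v)
    (S : Set (LaurentSeries F × LaurentSeries F)) :
    Submodule.span (PowerSeries F)
      (Φ '' (Submodule.span (PowerSeries F) S :
        Submodule (PowerSeries F) (LaurentSeries F × LaurentSeries F))) =
    Submodule.span (PowerSeries F) (Φ '' S) := by
  have hzs : ∀ v : LaurentSeries F × LaurentSeries F, (0 : LaurentSeries F) • v = 0 := by
    intro v; ext <;> simp
  have hΦ0 : Φ 0 = 0 := by
    have h := hΦsemi 0 0
    rwa [hzs, map_zero, hzs] at h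
  apply le_antisymm
  · rw [Submodule.span_le]
    rintro _ ⟨x, hx, rfl⟩
    induction hx using Submodule.span_induction with
    | mem x hx => exact Submodule.subset_span ⟨x, hx, rfl⟩
    | zero => simp [hΦ0]
    | add x y _ _ hx hy => rw [hΦadd]; exact add_mem hx hy
    | smul r x _ hx =>
        rw [← algebraMap_smul (LaurentSeries F) r x, hΦsemi]
        obtain ⟨r', hr'⟩ := hφR r
        rw [hr', algebraMap_smul]
        exact Submodule.smul_mem _ r' hx
  · exact Submodule.span_mono (Set.image_mono Submodule.subset_span)

/-- A `φ`-semilinear map `Φ` (with `φ(u) = u^p`, `φ` the identity on `F`,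
`φ(F[[u]]) ⊆ F[[u]]`) whose linearization is an isomorphism multiplies elementary
divisors of lattices by `p`: if `𝔐 = ⟨e₁,e₂⟩` and `𝔑 = ⟨u^a e₁, u^b e₂⟩`
(`a ≥ b`), then the lattice spanned by `Φ(𝔑)` equals
`⟨u^{pa}·Φe₁, u^{pb}·Φe₂⟩`, whose elementary divisors relative to the lattice
spanned by `Φ(𝔐)` — which is `⟨Φe₁, Φe₂⟩` — are `(pa, pb)`; in particular the
induced map on homothety classes multiplies the tree distance `a - b` by `p`. -/
theorem stmt_5 (F : Type*) [Field F] (p : ℕ) (hp : 0 < p) [CharP F p]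
    (φ : LaurentSeries F →+* LaurentSeries F)
    (hφu : φ (uLS F) = uLS F ^ (p : ℕ))
    (hφF : ∀ c : F, φ (algebraMap F (LaurentSeries F) c) =
      algebraMap F (LaurentSeries F) c)
    (hφR : ∀ r : PowerSeries F, ∃ r' : PowerSeries F,
      φ (algebraMap (PowerSeries F) (LaurentSeries F) r) =
        algebraMap (PowerSeries F) (LaurentSeries F) r')
    (Φ : LaurentSeries F × LaurentSeries F → LaurentSeries F × LaurentSeries F)
    (hΦadd : ∀ v w, Φ (v + w) = Φ v + Φ w)
    (hΦsemi : ∀ (c : LaurentSeries F) v, Φ (c • v) = φ c • Φ v)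
    (e1 e2 : LaurentSeries F × LaurentSeries F)
    (hli : LinearIndependent (LaurentSeries F) ![e1, e2])
    (hli' : LinearIndependent (LaurentSeries F) ![Φ e1, Φ e2])
    (a b : ℤ) (hab : b ≤ a) :
    Submodule.span (PowerSeries F)
        (Φ '' (Submodule.span (PowerSeries F) {uLS F ^ a • e1, uLS F ^ b • e2} :
          Submodule (PowerSeries F) (LaurentSeries F × LaurentSeries F))) =
      Submodule.span (PowerSeries F)
        {uLS F ^ ((p : ℤ) * a) • Φ e1, uLS F ^ ((p : ℤ) * b) • Φ e2} ∧
    Submodule.span (PowerSeries F)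
        (Φ '' (Submodule.span (PowerSeries F) {e1, e2} :
          Submodule (PowerSeries F) (LaurentSeries F × LaurentSeries F))) =
      Submodule.span (PowerSeries F) {Φ e1, Φ e2} ∧
    (p : ℤ) * a - (p : ℤ) * b = (p : ℤ) * (a - b) := by
  have key : ∀ n : ℤ, φ (uLS F ^ n) = uLS F ^ ((p : ℤ) * n) := by
    intro n
    rw [map_zpow₀, hφu, ← zpow_natCast (uLS F) p, ← zpow_mul]
  refine ⟨?_, ?_, by ring⟩
  · rw [span_image_span F φ hφR Φ hΦadd hΦsemi, Set.image_insert_eq, Set.image_singleton,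
      hΦsemi, hΦsemi, key, key]
  · rw [span_image_span F φ hφR Φ hΦadd hΦsemi, Set.image_insert_eq, Set.image_singleton]
end

section
/- Let $F$ be an algebraically closed field of characteristic $p > 0$, let $q = p^n$ for some $n \geq 1$, and let $\widetilde\phi: F((u)) \to F((u))$ be the identity on $F$ with $\widetilde\phi(u) = u^{q}$. Let $N_1$ be a 2-dimensional $F((u))$-vector space with basis $b_1, b_2$, and let $\widetilde\Phi: N_1 \to N_1$ be the $\widetilde\phi$-semilinear map determined by $\widetilde\Phi(b_1) = b_2$ and $\widetilde\Phi(b_2) = a u^s b_1$ for some $a \in F^\times$ and $s \in \mathbb{Z}$. If $(q+1)$ divides $s$, then the one-dimensional subspace $F((u)) \cdot (\sqrt{a}\, u^{s/(q+1)} b_1 + b_2)$ is stable under $\widetilde\Phi$, where $\sqrt{a}$ is a square root of $a$ in $F$; hence $(N_1, \widetilde\Phi)$ is not simple. -/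
/-- Let `F` be algebraically closed of characteristic `p > 0`, `q = pⁿ`, and let
`Φ` be the `φ̃`-semilinear map on `N₁ = F((u))²` (with `φ̃(u) = u^q`, `φ̃` the
identity on `F`) given in the basis `b₁ = (1,0)`, `b₂ = (0,1)` by
`Φ(b₁) = b₂`, `Φ(b₂) = a uˢ b₁`, i.e. `Φ(x, y) = (a uˢ ψ(y), ψ(x))`.
If `(q+1) ∣ s` then for any square root `r` of `a` the line
`F((u))·(r·u^{s/(q+1)} b₁ + b₂)` is `Φ`-stable; hence `(N₁, Φ)` is not simple. -/
theorem stmt_6 (F : Type*) [Field F] [IsAlgClosed F] (p : ℕ) (hp : 0 < p) [CharP F p]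
    (n : ℕ) (hn : 1 ≤ n) (q : ℕ) (hq : q = p ^ n)
    (ψ : LaurentSeries F →+* LaurentSeries F)
    (hψu : ψ (uLS F) = uLS F ^ (q : ℕ))
    (hψF : ∀ c : F, ψ (algebraMap F (LaurentSeries F) c) =
      algebraMap F (LaurentSeries F) c)
    (a : F) (ha : a ≠ 0) (s : ℤ)
    (Φ : LaurentSeries F × LaurentSeries F → LaurentSeries F × LaurentSeries F)
    (hΦ : ∀ x y : LaurentSeries F,
      Φ (x, y) = (algebraMap F (LaurentSeries F) a * uLS F ^ s * ψ y, ψ x))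
    (hdvd : ((q : ℤ) + 1) ∣ s) :
    (∀ r : F, r * r = a →
      (∀ v ∈ Submodule.span (LaurentSeries F)
          {(algebraMap F (LaurentSeries F) r * uLS F ^ (s / ((q : ℤ) + 1)),
            (1 : LaurentSeries F))},
        Φ v ∈ Submodule.span (LaurentSeries F)
          {(algebraMap F (LaurentSeries F) r * uLS F ^ (s / ((q : ℤ) + 1)),
            (1 : LaurentSeries F))}) ∧
      Submodule.span (LaurentSeries F)
          {(algebraMap F (LaurentSeries F) r * uLS F ^ (s / ((q : ℤ) + 1)),
            (1 : LaurentSeries F))} ≠ ⊥ ∧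
      Submodule.span (LaurentSeries F)
          {(algebraMap F (LaurentSeries F) r * uLS F ^ (s / ((q : ℤ) + 1)),
            (1 : LaurentSeries F))} ≠ ⊤) ∧
    ∃ V : Submodule (LaurentSeries F) (LaurentSeries F × LaurentSeries F),
      V ≠ ⊥ ∧ V ≠ ⊤ ∧ ∀ v ∈ V, Φ v ∈ V := by
  classical
  have hu : uLS F ≠ 0 := by
    have hinj := IsFractionRing.injective (PowerSeries F) (LaurentSeries F)
    intro h
    exact PowerSeries.X_ne_zero (hinj (by rw [← uLS, h, map_zero]))
  have main : ∀ r : F, r * r = a →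
      (∀ v ∈ Submodule.span (LaurentSeries F)
          {(algebraMap F (LaurentSeries F) r * uLS F ^ (s / ((q : ℤ) + 1)),
            (1 : LaurentSeries F))},
        Φ v ∈ Submodule.span (LaurentSeries F)
          {(algebraMap F (LaurentSeries F) r * uLS F ^ (s / ((q : ℤ) + 1)),
            (1 : LaurentSeries F))}) ∧
      Submodule.span (LaurentSeries F)
          {(algebraMap F (LaurentSeries F) r * uLS F ^ (s / ((q : ℤ) + 1)),
            (1 : LaurentSeries F))} ≠ ⊥ ∧
      Submodule.span (LaurentSeries F)
          {(algebraMap F (LaurentSeries F) r * uLS F ^ (s / ((q : ℤ) + 1)),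
            (1 : LaurentSeries F))} ≠ ⊤ := by
    intro r hr
    set t : ℤ := s / ((q : ℤ) + 1) with ht
    have hq1 : ((q : ℤ) + 1) ≠ 0 := by positivity
    have hst : (q : ℤ) * t + t = s := by
      obtain ⟨k, hk⟩ := hdvd
      have htk : t = k := by rw [ht, hk, Int.mul_ediv_cancel_left k hq1]
      rw [htk, hk]; ring
    set w : LaurentSeries F := algebraMap F (LaurentSeries F) r * uLS F ^ t with hw
    have hψw : ψ w = algebraMap F (LaurentSeries F) r * uLS F ^ ((q : ℤ) * t) := by
      rw [hw, map_mul, hψF r, map_zpow₀, hψu, ← zpow_natCast (uLS F) q, ← zpow_mul]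
    have hkey : ψ w * w = algebraMap F (LaurentSeries F) a * uLS F ^ s := by
      rw [hψw, hw]
      calc algebraMap F (LaurentSeries F) r * uLS F ^ ((q : ℤ) * t) *
            (algebraMap F (LaurentSeries F) r * uLS F ^ t)
          = (algebraMap F (LaurentSeries F) r * algebraMap F (LaurentSeries F) r) *
            (uLS F ^ ((q : ℤ) * t) * uLS F ^ t) := by ring
        _ = algebraMap F (LaurentSeries F) a * uLS F ^ s := by
            rw [← map_mul, hr, ← zpow_add₀ hu, hst]
    refine ⟨?_, ?_, ?_⟩
    · intro v hv
      rw [Submodule.mem_span_singleton] at hv ⊢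
      obtain ⟨c, rfl⟩ := hv
      refine ⟨ψ c * ψ w, ?_⟩
      have h1 : c • (w, (1 : LaurentSeries F)) = (c * w, c) := by
        simp [Prod.smul_def, smul_eq_mul]
      rw [h1, hΦ]
      have h2 : ψ (c * w) = ψ c * ψ w := map_mul ψ c w
      simp only [Prod.smul_def, smul_eq_mul, Prod.mk.injEq, h2]
      refine ⟨?_, by ring⟩
      rw [mul_assoc, hkey]; ring
    · rw [Ne, Submodule.span_singleton_eq_bot]
      intro h
      have := congrArg Prod.snd h
      simp at this
    · intro h
      have hmem : ((1 : LaurentSeries F), (0 : LaurentSeries F)) ∈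
          Submodule.span (LaurentSeries F) {(w, (1 : LaurentSeries F))} := by
        rw [h]; trivial
      rw [Submodule.mem_span_singleton] at hmem
      obtain ⟨c, hc⟩ := hmem
      have h2 : c = 0 := by
        have := congrArg Prod.snd hc
        simpa using this
      have h1 := congrArg Prod.fst hc
      rw [h2] at h1
      simp at h1
  refine ⟨main, ?_⟩
  obtain ⟨r, hr⟩ := IsAlgClosed.exists_pow_nat_eq a (n := 2) (by norm_num)
  have hr' : r * r = a := by rw [← hr]; ring
  obtain ⟨h1, h2, h3⟩ := main r hr'
  exact ⟨_, h2, h3, h1⟩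
end
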